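/- Let σ = tanh and let w_1, …, w_m ∈ ℝ^d \ {0} be pairwise distinct with w_k ≠ ±w_j for k ≠ j, and a_1, …, a_m ∈ ℝ \ {0}. Then dim span{σ(w_iᵀx), a_i σ'(w_iᵀx)x_1, …, a_i σ'(w_iᵀx)x_d}_{i=1}^m = m(d+1). -/

import Mathlib

open Real Filter Topology Finset

lemma my_deriv_tanh : deriv Real.tanh = fun x => 1 / Real.cosh x ^ 2 := by
  funext x
  have h1 : HasDerivAt Real.tanh (1 / Real.cosh x ^ 2) x := by
    have h := (Real.hasDerivAt_sinh x).div (Real.hasDerivAt_cosh x) (Real.cosh_pos x).ne'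
    have hfun : (fun y => Real.sinh y / Real.cosh y) = Real.tanh := by
      funext y; rw [Real.tanh_eq_sinh_div_cosh]
    rw [show (Real.sinh / Real.cosh) = Real.tanh from hfun] at h
    refine h.congr_deriv ?_
    have := Real.cosh_sq_sub_sinh_sq x
    rw [div_left_inj' (pow_ne_zero 2 (Real.cosh_pos x).ne')]
    nlinarith [Real.cosh_pos x]
  exact h1.deriv

lemma tanh_sub_one (t : ℝ) :
    Real.tanh t - 1 = -(2 * Real.exp (-(2*t))) / (1 + Real.exp (-(2*t))) := by
  rw [Real.tanh_eq_sinh_div_cosh, Real.sinh_eq, Real.cosh_eq]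
  have h1 : Real.exp (-(2*t)) = Real.exp (-t) * Real.exp (-t) := by
    rw [← Real.exp_add]; ring_nf
  have h2 : Real.exp t * Real.exp (-t) = 1 := by rw [← Real.exp_add]; simp
  have h3 : Real.exp t + Real.exp (-t) ≠ 0 := by positivity
  have h4 : (1:ℝ) + Real.exp (-(2*t)) ≠ 0 := by positivity
  field_simp
  rw [show -(t*2) = -(2*t) by ring, h1]
  linear_combination (2*Real.exp (-t)) * h2

lemma inv_cosh_sq (t : ℝ) :
    1 / Real.cosh t ^ 2 = 4 * Real.exp (-(2*t)) / (1 + Real.exp (-(2*t)))^2 := by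
  rw [Real.cosh_eq]
  have h1 : Real.exp (-(2*t)) = Real.exp (-t) * Real.exp (-t) := by
    rw [← Real.exp_add]; ring_nf
  have h2 : Real.exp t * Real.exp (-t) = 1 := by rw [← Real.exp_add]; simp
  have h3 : Real.exp t + Real.exp (-t) ≠ 0 := by positivity
  have h4 : (1:ℝ) + Real.exp (-(2*t)) ≠ 0 := by positivity
  field_simp
  rw [show -(t*2) = -(2*t) by ring, h1]
  linear_combination (-(4*(1 + Real.exp t*Real.exp (-t)) + 8*Real.exp (-t)^2)) * h2


lemma exp_neg_lim {b : ℝ} (hb : 0 < b) :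
    Tendsto (fun x : ℝ => Real.exp (-(b*x))) atTop (𝓝 0) := by
  have h1 : Tendsto (fun x : ℝ => b*x) atTop atTop :=
    Tendsto.const_mul_atTop hb tendsto_id
  exact Real.tendsto_exp_atBot.comp (tendsto_neg_atTop_atBot.comp h1)

lemma mul_exp_neg_lim {b : ℝ} (hb : 0 < b) :
    Tendsto (fun x : ℝ => x * Real.exp (-(b*x))) atTop (𝓝 0) := by
  have h0 := Real.tendsto_pow_mul_exp_neg_atTop_nhds_zero 1
  have h1 : Tendsto (fun x : ℝ => b*x) atTop atTop :=
    Tendsto.const_mul_atTop hb tendsto_id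
  have h2 := (h0.comp h1).const_mul (1/b)
  simp only [mul_zero] at h2
  refine h2.congr fun x => ?_
  simp only [Function.comp_apply, pow_one]
  field_simp

lemma hv_lim {B b : ℝ} (hb : 0 < b) (hBb : B ≤ b) :
    Tendsto (fun x : ℝ => Real.exp (-((2*b-2*B)*x))) atTop (𝓝 (if B = b then 1 else 0)) := by
  rcases eq_or_lt_of_le hBb with rfl | hlt
  · simp only [if_pos rfl]
    have : (fun x : ℝ => Real.exp (-((2*B-2*B)*x))) = fun _ => 1 := by
      funext x; norm_num
    rw [this]; exact tendsto_const_nhds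
  · rw [if_neg hlt.ne]; exact exp_neg_lim (by linarith)

lemma hu_lim {b : ℝ} (hb : 0 < b) :
    Tendsto (fun x : ℝ => 1 + Real.exp (-(2*b*x))) atTop (𝓝 1) := by
  have := (tendsto_const_nhds (α := ℝ) (f := atTop) (x := (1:ℝ))).add (exp_neg_lim (b := 2*b) (by linarith))
  simpa using this

lemma tendsto_exp_tanh {B b : ℝ} (hb : 0 < b) (hBb : B ≤ b) :
    Tendsto (fun x : ℝ => Real.exp (2*B*x) * (Real.tanh (b*x) - 1)) atTop
      (𝓝 (if B = b then -2 else 0)) := by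
  have key : ∀ x : ℝ, Real.exp (2*B*x) * (Real.tanh (b*x) - 1)
      = -(2 * Real.exp (-((2*b-2*B)*x))) / (1 + Real.exp (-(2*b*x))) := by
    intro x
    have h1 : Real.tanh (b*x) - 1
        = -(2 * Real.exp (-(2*(b*x)))) / (1 + Real.exp (-(2*(b*x)))) := tanh_sub_one (b*x)
    have e1 : Real.exp (-(2*(b*x))) = Real.exp (-(2*b*x)) := by ring_nf
    have e2 : Real.exp (2*B*x) * Real.exp (-(2*b*x)) = Real.exp (-((2*b-2*B)*x)) := by
      rw [← Real.exp_add]; ring_nf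
    rw [h1, e1, mul_div_assoc']
    rw [show Real.exp (2*B*x) * -(2 * Real.exp (-(2*b*x)))
        = -(2 * (Real.exp (2*B*x) * Real.exp (-(2*b*x)))) by ring, e2]
  have h2 : Tendsto (fun x : ℝ => -(2 * Real.exp (-((2*b-2*B)*x))) / (1 + Real.exp (-(2*b*x))))
      atTop (𝓝 (-(2 * (if B = b then 1 else 0)) / 1)) :=
    (((hv_lim hb hBb).const_mul 2).neg).div (hu_lim hb) one_ne_zero
  have h3 : (-(2 * (if B = b then (1:ℝ) else 0)) / 1) = (if B = b then -2 else 0) := by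
    split_ifs <;> norm_num
  rw [h3] at h2
  exact h2.congr fun x => (key x).symm

lemma tendsto_exp_cosh {B b : ℝ} (hb : 0 < b) (hBb : B ≤ b) :
    Tendsto (fun x : ℝ => Real.exp (2*B*x) / Real.cosh (b*x) ^ 2) atTop
      (𝓝 (if B = b then 4 else 0)) := by
  have key : ∀ x : ℝ, Real.exp (2*B*x) / Real.cosh (b*x) ^ 2
      = 4 * Real.exp (-((2*b-2*B)*x)) / (1 + Real.exp (-(2*b*x)))^2 := by
    intro x
    have h1 : 1 / Real.cosh (b*x) ^ 2
        = 4 * Real.exp (-(2*(b*x))) / (1 + Real.exp (-(2*(b*x))))^2 := inv_cosh_sq (b*x)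
    have e1 : Real.exp (-(2*(b*x))) = Real.exp (-(2*b*x)) := by ring_nf
    have e2 : Real.exp (2*B*x) * Real.exp (-(2*b*x)) = Real.exp (-((2*b-2*B)*x)) := by
      rw [← Real.exp_add]; ring_nf
    have h2 : Real.exp (2*B*x) / Real.cosh (b*x) ^ 2
        = Real.exp (2*B*x) * (1 / Real.cosh (b*x) ^ 2) := by ring
    rw [h2, h1, e1, mul_div_assoc']
    rw [show Real.exp (2*B*x) * (4 * Real.exp (-(2*b*x)))
        = 4 * (Real.exp (2*B*x) * Real.exp (-(2*b*x))) by ring, e2]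
  have h2 : Tendsto (fun x : ℝ => 4 * Real.exp (-((2*b-2*B)*x)) / (1 + Real.exp (-(2*b*x)))^2)
      atTop (𝓝 (4 * (if B = b then 1 else 0) / 1^2)) :=
    ((hv_lim hb hBb).const_mul 4).div ((hu_lim hb).pow 2) (by norm_num)
  have h3 : (4 * (if B = b then (1:ℝ) else 0) / 1^2) = (if B = b then 4 else 0) := by
    split_ifs <;> norm_num
  rw [h3] at h2
  exact h2.congr fun x => (key x).symm

lemma tendsto_x_exp_cosh {B b : ℝ} (hb : 0 < b) (hBb : B < b) :
    Tendsto (fun x : ℝ => x * (Real.exp (2*B*x) / Real.cosh (b*x) ^ 2)) atTop (𝓝 0) := by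
  have key : ∀ x : ℝ, x * (Real.exp (2*B*x) / Real.cosh (b*x) ^ 2)
      = 4 * (x * Real.exp (-((2*b-2*B)*x))) / (1 + Real.exp (-(2*b*x)))^2 := by
    intro x
    have h1 : 1 / Real.cosh (b*x) ^ 2
        = 4 * Real.exp (-(2*(b*x))) / (1 + Real.exp (-(2*(b*x))))^2 := inv_cosh_sq (b*x)
    have e1 : Real.exp (-(2*(b*x))) = Real.exp (-(2*b*x)) := by ring_nf
    have e2 : Real.exp (2*B*x) * Real.exp (-(2*b*x)) = Real.exp (-((2*b-2*B)*x)) := by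
      rw [← Real.exp_add]; ring_nf
    have h2 : x * (Real.exp (2*B*x) / Real.cosh (b*x) ^ 2)
        = x * Real.exp (2*B*x) * (1 / Real.cosh (b*x) ^ 2) := by ring
    rw [h2, h1, e1, mul_div_assoc']
    rw [show x * Real.exp (2*B*x) * (4 * Real.exp (-(2*b*x)))
        = 4 * (x * (Real.exp (2*B*x) * Real.exp (-(2*b*x)))) by ring, e2]
  have h2 : Tendsto (fun x : ℝ => 4 * (x * Real.exp (-((2*b-2*B)*x))) / (1 + Real.exp (-(2*b*x)))^2)
      atTop (𝓝 (4 * 0 / 1^2)) :=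
    ((mul_exp_neg_lim (b := 2*b-2*B) (by linarith)).const_mul 4).div ((hu_lim hb).pow 2) (by norm_num)
  norm_num at h2
  exact h2.congr fun x => (key x).symm

lemma tendsto_tanh_one {b : ℝ} (hb : 0 < b) :
    Tendsto (fun x : ℝ => Real.tanh (b*x)) atTop (𝓝 1) := by
  have h := tendsto_exp_tanh (B := 0) hb hb.le
  rw [if_neg hb.ne] at h
  simp only [mul_zero, zero_mul, Real.exp_zero, one_mul] at h
  have := h.add (tendsto_const_nhds (α := ℝ) (f := atTop) (x := (1:ℝ)))
  simpa using this

lemma tendsto_x_cosh {b : ℝ} (hb : 0 < b) :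
    Tendsto (fun x : ℝ => x / Real.cosh (b*x) ^ 2) atTop (𝓝 0) := by
  have h := tendsto_x_exp_cosh (B := 0) hb hb
  simp only [mul_zero, zero_mul, Real.exp_zero, one_div] at h
  refine h.congr fun x => ?_
  rw [div_eq_mul_inv]

lemma oneD_pos {m : ℕ} (b c e : Fin m → ℝ) (hb : ∀ i, 0 < b i)
    (hinj : ∀ i j, i ≠ j → b i ≠ b j) :
    ∀ s : Finset (Fin m),
      (∀ x : ℝ, ∑ i ∈ s, (c i * Real.tanh (b i * x) + e i * (x / Real.cosh (b i * x)^2)) = 0) →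
      ∀ i ∈ s, c i = 0 ∧ e i = 0 := by
  intro s
  induction s using Finset.strongInduction with
  | _ s ih =>
    intro hsum i hi
    obtain ⟨i₀, hi₀s, hmin⟩ := s.exists_min_image b ⟨i, hi⟩
    have hBpos : 0 < b i₀ := hb i₀
    -- Step 1 : sum of c over s is 0
    have hstep1 : ∑ j ∈ s, c j = 0 := by
      have hlim : Tendsto
          (fun x => ∑ j ∈ s, (c j * Real.tanh (b j * x) + e j * (x / Real.cosh (b j * x)^2)))
          atTop (𝓝 (∑ j ∈ s, (c j * 1 + e j * 0))) := by
        apply tendsto_finset_sum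
        intro j _
        exact ((tendsto_tanh_one (hb j)).const_mul (c j)).add
          ((tendsto_x_cosh (hb j)).const_mul (e j))
      have h0 := tendsto_nhds_unique (hlim.congr hsum)
        (tendsto_const_nhds (α := ℝ) (f := atTop) (x := (0:ℝ)))
      simpa using h0
    -- the "shifted" sum is identically 0
    have hG : ∀ x : ℝ,
        ∑ j ∈ s, (c j * (Real.tanh (b j * x) - 1) + e j * (x / Real.cosh (b j * x)^2)) = 0 := by
      intro x
      have : ∑ j ∈ s, (c j * (Real.tanh (b j * x) - 1) + e j * (x / Real.cosh (b j * x)^2))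
          = (∑ j ∈ s, (c j * Real.tanh (b j * x) + e j * (x / Real.cosh (b j * x)^2)))
            - ∑ j ∈ s, c j := by
        rw [← Finset.sum_sub_distrib]
        exact Finset.sum_congr rfl fun j _ => by ring
      rw [this, hsum x, hstep1, sub_zero]
    -- Step 2 : e i₀ = 0
    have hstep2 : e i₀ = 0 := by
      have hterm : ∀ j ∈ s, Tendsto
          (fun x => (c j * (Real.tanh (b j * x) - 1) + e j * (x / Real.cosh (b j * x)^2))
            * (Real.exp (2 * b i₀ * x) / x)) atTop
          (𝓝 (if j = i₀ then 4 * e j else 0)) := by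
        intro j hj
        have hble : b i₀ ≤ b j := hmin j hj
        have h1 : Tendsto
            (fun x => c j * ((Real.exp (2 * b i₀ * x) * (Real.tanh (b j * x) - 1)) * x⁻¹)
              + e j * (Real.exp (2 * b i₀ * x) / Real.cosh (b j * x)^2)) atTop
            (𝓝 (c j * ((if b i₀ = b j then -2 else 0) * 0)
              + e j * (if b i₀ = b j then 4 else 0))) := by
          exact ((((tendsto_exp_tanh (hb j) hble).mul tendsto_inv_atTop_zero)).const_mul
            (c j)).add ((tendsto_exp_cosh (hb j) hble).const_mul (e j))
        have heq : ∀ᶠ x : ℝ in atTop,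
            c j * ((Real.exp (2 * b i₀ * x) * (Real.tanh (b j * x) - 1)) * x⁻¹)
              + e j * (Real.exp (2 * b i₀ * x) / Real.cosh (b j * x)^2)
            = (c j * (Real.tanh (b j * x) - 1) + e j * (x / Real.cosh (b j * x)^2))
              * (Real.exp (2 * b i₀ * x) / x) := by
          filter_upwards [eventually_gt_atTop (0:ℝ)] with x hx
          field_simp
        have h2 := h1.congr' heq
        have hval : (c j * ((if b i₀ = b j then (-2:ℝ) else 0) * 0)
            + e j * (if b i₀ = b j then (4:ℝ) else 0)) = (if j = i₀ then 4 * e j else 0) := by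
          by_cases hji : j = i₀
          · subst hji; simp [mul_comm]
          · have hne : b i₀ ≠ b j := hinj i₀ j (Ne.symm hji)
            simp [hne, hji]
        rwa [hval] at h2
      have hlim2 : Tendsto
          (fun x => ∑ j ∈ s, ((c j * (Real.tanh (b j * x) - 1) + e j * (x / Real.cosh (b j * x)^2))
            * (Real.exp (2 * b i₀ * x) / x))) atTop (𝓝 (∑ j ∈ s, if j = i₀ then 4 * e j else 0)) :=
        tendsto_finset_sum _ hterm
      have hzero : ∀ x : ℝ, ∑ j ∈ s, ((c j * (Real.tanh (b j * x) - 1)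
          + e j * (x / Real.cosh (b j * x)^2)) * (Real.exp (2 * b i₀ * x) / x)) = 0 := by
        intro x
        rw [← Finset.sum_mul, hG x, zero_mul]
      have h0 := tendsto_nhds_unique (hlim2.congr hzero)
        (tendsto_const_nhds (α := ℝ) (f := atTop) (x := (0:ℝ)))
      rw [Finset.sum_ite_eq' s i₀ (fun j => 4 * e j), if_pos hi₀s] at h0
      linarith [h0.symm]
    -- Step 3 : c i₀ = 0
    have hstep3 : c i₀ = 0 := by
      have hterm : ∀ j ∈ s, Tendsto
          (fun x => (c j * (Real.tanh (b j * x) - 1) + e j * (x / Real.cosh (b j * x)^2))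
            * Real.exp (2 * b i₀ * x)) atTop
          (𝓝 (if j = i₀ then -2 * c j else 0)) := by
        intro j hj
        have hble : b i₀ ≤ b j := hmin j hj
        by_cases hji : j = i₀
        · subst hji
          have h1 : Tendsto
              (fun x => c j * (Real.exp (2 * b j * x) * (Real.tanh (b j * x) - 1))) atTop
              (𝓝 (c j * (if b j = b j then -2 else 0))) :=
            (tendsto_exp_tanh (hb j) le_rfl).const_mul (c j)
          rw [if_pos rfl] at h1
          have heq : ∀ x : ℝ,
              c j * (Real.exp (2 * b j * x) * (Real.tanh (b j * x) - 1))
              = (c j * (Real.tanh (b j * x) - 1) + e j * (x / Real.cosh (b j * x)^2))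
                * Real.exp (2 * b j * x) := by
            intro x; rw [hstep2]; ring
          have h2 := h1.congr heq
          rw [if_pos rfl]
          have : c j * (-2 : ℝ) = -2 * c j := by ring
          rwa [this] at h2
        · have hblt : b i₀ < b j := lt_of_le_of_ne hble (hinj i₀ j (Ne.symm hji))
          have h1 : Tendsto
              (fun x => c j * (Real.exp (2 * b i₀ * x) * (Real.tanh (b j * x) - 1))
                + e j * (x * (Real.exp (2 * b i₀ * x) / Real.cosh (b j * x)^2))) atTop
              (𝓝 (c j * (if b i₀ = b j then -2 else 0) + e j * 0)) :=
            ((tendsto_exp_tanh (hb j) hble).const_mul (c j)).add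
              ((tendsto_x_exp_cosh (hb j) hblt).const_mul (e j))
          rw [if_neg hblt.ne] at h1
          have heq : ∀ x : ℝ,
              c j * (Real.exp (2 * b i₀ * x) * (Real.tanh (b j * x) - 1))
                + e j * (x * (Real.exp (2 * b i₀ * x) / Real.cosh (b j * x)^2))
              = (c j * (Real.tanh (b j * x) - 1) + e j * (x / Real.cosh (b j * x)^2))
                * Real.exp (2 * b i₀ * x) := by
            intro x; field_simp
          have h2 := h1.congr heq
          rw [if_neg hji]
          simpa using h2
      have hlim2 : Tendsto
          (fun x => ∑ j ∈ s, ((c j * (Real.tanh (b j * x) - 1) + e j * (x / Real.cosh (b j * x)^2))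
            * Real.exp (2 * b i₀ * x))) atTop (𝓝 (∑ j ∈ s, if j = i₀ then -2 * c j else 0)) :=
        tendsto_finset_sum _ hterm
      have hzero : ∀ x : ℝ, ∑ j ∈ s, ((c j * (Real.tanh (b j * x) - 1)
          + e j * (x / Real.cosh (b j * x)^2)) * Real.exp (2 * b i₀ * x)) = 0 := by
        intro x
        rw [← Finset.sum_mul, hG x, zero_mul]
      have h0 := tendsto_nhds_unique (hlim2.congr hzero)
        (tendsto_const_nhds (α := ℝ) (f := atTop) (x := (0:ℝ)))
      rw [Finset.sum_ite_eq' s i₀ (fun j => -2 * c j), if_pos hi₀s] at h0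
      linarith [h0.symm]
    -- Step 4 : induction on the rest
    by_cases hii : i = i₀
    · subst hii; exact ⟨hstep3, hstep2⟩
    · have hsub : s.erase i₀ ⊂ s := Finset.erase_ssubset hi₀s
      have hsum' : ∀ x : ℝ, ∑ j ∈ s.erase i₀,
          (c j * Real.tanh (b j * x) + e j * (x / Real.cosh (b j * x)^2)) = 0 := by
        intro x
        have h2 := hsum x
        rw [← Finset.sum_erase_add s _ hi₀s, hstep2, hstep3] at h2
        simpa using h2
      exact ih _ hsub hsum' i (Finset.mem_erase.2 ⟨hii, hi⟩)

lemma oneD {m : ℕ} (b c e : Fin m → ℝ) (hb : ∀ i, b i ≠ 0)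
    (habs : ∀ i j, i ≠ j → |b i| ≠ |b j|)
    (h : ∀ x : ℝ, ∑ i, (c i * Real.tanh (b i * x) + e i * (x / Real.cosh (b i * x)^2)) = 0) :
    ∀ i, c i = 0 ∧ e i = 0 := by
  classical
  set b' : Fin m → ℝ := fun i => |b i| with hb'def
  set c' : Fin m → ℝ := fun i => if 0 < b i then c i else -c i with hc'def
  have hb' : ∀ i, 0 < b' i := fun i => abs_pos.2 (hb i)
  have hinj : ∀ i j, i ≠ j → b' i ≠ b' j := fun i j hij => habs i j hij
  have h' : ∀ x : ℝ, ∑ i, (c' i * Real.tanh (b' i * x) + e i * (x / Real.cosh (b' i * x)^2)) = 0 := by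
    intro x
    rw [← h x]
    apply Finset.sum_congr rfl
    intro i _
    by_cases hpos : 0 < b i
    · simp [hc'def, hb'def, abs_of_pos hpos, hpos]
    · have hneg : b i < 0 := lt_of_le_of_ne (not_lt.1 hpos) (hb i)
      have habs' : |b i| = -(b i) := abs_of_neg hneg
      simp only [hc'def, hb'def, if_neg hpos, habs']
      rw [show -(b i) * x = -(b i * x) by ring, Real.tanh_neg, Real.cosh_neg]
      ring
  intro i
  obtain ⟨h1, h2⟩ := oneD_pos b' c' e hb' hinj Finset.univ h' i (Finset.mem_univ i)
  refine ⟨?_, h2⟩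
  by_cases hpos : 0 < b i
  · simpa [hc'def, hpos] using h1
  · simpa [hc'def, hpos] using h1

lemma dot_expand {d : ℕ} (f x y : Fin d → ℝ) (r : ℝ) :
    ∑ t, f t * (x t + r * y t) = (∑ t, f t * x t) + r * ∑ t, f t * y t := by
  simp [mul_add, Finset.sum_add_distrib, Finset.mul_sum, mul_left_comm]

lemma exists_common_nonvanishing {d : ℕ} {ι : Type*} [Fintype ι] [DecidableEq ι] (v : ι → Fin d → ℝ) (hv : ∀ j, v j ≠ 0) :
    ∃ y : Fin d → ℝ, ∀ j, ∑ t, v j t * y t ≠ 0 := by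
  classical
  suffices h : ∀ s : Finset ι, ∃ y : Fin d → ℝ, ∀ j ∈ s, ∑ t, v j t * y t ≠ 0 by
    obtain ⟨y, hy⟩ := h Finset.univ
    exact ⟨y, fun j => hy j (Finset.mem_univ j)⟩
  intro s
  refine Finset.induction_on s ⟨0, by simp⟩ ?_
  rintro j s hjs ⟨y, hy⟩
  obtain ⟨t₀, ht₀⟩ : ∃ t₀, v j t₀ ≠ 0 := by
    by_contra hcon; push_neg at hcon; exact hv j (funext hcon)
  set z : Fin d → ℝ := Pi.single t₀ 1 with hzdef
  have hz : ∑ t, v j t * z t = v j t₀ := by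
    simp [hzdef, Pi.single_apply]
  set F : Finset ℝ :=
    (insert j s).image (fun i => -(∑ t, v i t * y t)/(∑ t, v i t * z t)) with hFdef
  obtain ⟨r, hr⟩ := Infinite.exists_notMem_finset F
  refine ⟨fun t => y t + r * z t, ?_⟩
  intro i hi
  rw [dot_expand]
  by_cases hC : (∑ t, v i t * z t) = 0
  · have hij : i ≠ j := by
      intro hij; subst hij
      rw [hz] at hC; exact ht₀ hC
    have his : i ∈ s := (Finset.mem_insert.1 hi).resolve_left hij
    rw [hC, mul_zero, add_zero]
    exact hy i his
  · intro hcon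
    apply hr
    rw [hFdef]
    refine Finset.mem_image.2 ⟨i, hi, ?_⟩
    field_simp
    linarith [hcon]

lemma functional_zero {d : ℕ} {ι : Type*} [Fintype ι] [DecidableEq ι] (v : ι → Fin d → ℝ) (hv : ∀ j, v j ≠ 0) (γ : Fin d → ℝ)
    (h : ∀ x : Fin d → ℝ, (∀ j, ∑ t, v j t * x t ≠ 0) → ∑ t, γ t * x t = 0) :
    γ = 0 := by
  classical
  obtain ⟨y, hy⟩ := exists_common_nonvanishing v hv
  have key : ∀ x : Fin d → ℝ, ∑ t, γ t * x t = 0 := by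
    intro x
    set F : Finset ℝ :=
      Finset.univ.image (fun j : ι => -(∑ t, v j t * x t)/(∑ t, v j t * y t)) with hFdef
    have good : ∀ r, r ∉ F → ∀ j, ∑ t, v j t * (x t + r * y t) ≠ 0 := by
      intro r hrF j hcon
      rw [dot_expand] at hcon
      apply hrF
      rw [hFdef]
      refine Finset.mem_image.2 ⟨j, Finset.mem_univ j, ?_⟩
      have hCj : ∑ t, v j t * y t ≠ 0 := hy j
      field_simp
      linarith [hcon]
    obtain ⟨r₁, hr₁⟩ := Infinite.exists_notMem_finset F
    obtain ⟨r₂, hr₂⟩ := Infinite.exists_notMem_finset (insert r₁ F)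
    have h1 := h _ (good r₁ hr₁)
    have h2 := h _ (good r₂ (fun hm => hr₂ (Finset.mem_insert_of_mem hm)))
    rw [dot_expand] at h1 h2
    have hne : r₁ ≠ r₂ := fun hrr => hr₂ (hrr ▸ Finset.mem_insert_self r₁ F)
    have hCγ : ∑ t, γ t * y t = 0 := by
      have := sub_eq_zero.2 (h1.trans h2.symm)
      have h3 : (r₁ - r₂) * ∑ t, γ t * y t = 0 := by linarith [this]
      rcases mul_eq_zero.1 h3 with h4 | h4
      · exact absurd (sub_eq_zero.1 h4) hne
      · exact h4
    rw [hCγ, mul_zero, add_zero] at h1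
    exact h1
  funext t
  have := key (Pi.single t 1)
  simpa [Pi.single_apply] using this

lemma sum_sub_dot {d : ℕ} (u v x : Fin d → ℝ) :
    ∑ t, (u t - v t) * x t = (∑ t, u t * x t) - ∑ t, v t * x t := by
  rw [← Finset.sum_sub_distrib]
  exact Finset.sum_congr rfl fun t _ => by ring

lemma sum_add_dot {d : ℕ} (u v x : Fin d → ℝ) :
    ∑ t, (u t + v t) * x t = (∑ t, u t * x t) + ∑ t, v t * x t := by
  rw [← Finset.sum_add_distrib]
  exact Finset.sum_congr rfl fun t _ => by ring

/-- for tanh with pairwise distinct, non-antipodal, nonzero weights and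
nonzero output weights, the span of the neuron functions and their scaled derivative
functions has dimension `m * (d + 1)`. -/
theorem two_layer_tanh_full_rank {d m : ℕ}
    (w : Fin m → Fin d → ℝ) (a : Fin m → ℝ)
    (hw0 : ∀ i, w i ≠ 0) (hw : ∀ k j, k ≠ j → w k ≠ w j ∧ w k ≠ -w j)
    (ha : ∀ i, a i ≠ 0) :
    Module.finrank ℝ (Submodule.span ℝ (Set.range
      (Sum.elim
        (fun i : Fin m => fun x : Fin d → ℝ => Real.tanh (∑ t, w i t * x t))
        (fun p : Fin m × Fin d => fun x : Fin d → ℝ =>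
          a p.1 * deriv Real.tanh (∑ t, w p.1 t * x t) * x p.2)))) = m * (d + 1) := by
  classical
  have hli : LinearIndependent ℝ
      (Sum.elim
        (fun i : Fin m => fun x : Fin d → ℝ => Real.tanh (∑ t, w i t * x t))
        (fun p : Fin m × Fin d => fun x : Fin d → ℝ =>
          a p.1 * deriv Real.tanh (∑ t, w p.1 t * x t) * x p.2)) := by
    rw [Fintype.linearIndependent_iff]
    intro g hg
    set c : Fin m → ℝ := fun i => g (Sum.inl i) with hcdef
    set γ : Fin m → Fin d → ℝ := fun i t => a i * g (Sum.inr (i, t)) with hγdef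
    -- pointwise identity
    have key : ∀ x : Fin d → ℝ,
        ∑ i, (c i * Real.tanh (∑ t, w i t * x t)
          + (∑ t, γ i t * x t) * (1 / Real.cosh (∑ t, w i t * x t)^2)) = 0 := by
      intro x
      have h1 := congrFun hg x
      rw [Finset.sum_apply] at h1
      simp only [Pi.smul_apply, smul_eq_mul, Pi.zero_apply] at h1
      rw [Fintype.sum_sum_type] at h1
      simp only [Sum.elim_inl, Sum.elim_inr] at h1
      rw [Fintype.sum_prod_type] at h1
      rw [← h1]
      rw [← Finset.sum_add_distrib]
      apply Finset.sum_congr rfl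
      intro i _
      congr 1
      rw [my_deriv_tanh]
      rw [Finset.sum_mul]
      apply Finset.sum_congr rfl
      intro t _
      simp only [hγdef]
      ring
    -- the collection of "genericity" vectors
    set v : (Fin m ⊕ ((Fin m × Fin m) ⊕ (Fin m × Fin m))) → Fin d → ℝ :=
      Sum.elim w (Sum.elim
        (fun p => if p.1 = p.2 then w p.1 else w p.1 - w p.2)
        (fun p => if p.1 = p.2 then w p.1 else w p.1 + w p.2)) with hvdef
    have hv : ∀ j, v j ≠ 0 := by
      rintro (i | ⟨i, j⟩ | ⟨i, j⟩)
      · exact hw0 i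
      · by_cases hij : i = j
        · simpa [hvdef, hij] using hw0 j
        · simpa [hvdef, hij] using sub_ne_zero.2 (hw i j hij).1
      · by_cases hij : i = j
        · simpa [hvdef, hij] using hw0 j
        · have h2 : w i + w j ≠ 0 := by
            intro hcon
            exact (hw i j hij).2 (by rw [eq_neg_iff_add_eq_zero]; exact hcon)
          simpa [hvdef, hij] using h2
    -- on every generic x, all coefficients annihilate
    have main : ∀ x : Fin d → ℝ, (∀ j, ∑ t, v j t * x t ≠ 0) →
        ∀ i, c i = 0 ∧ (∑ t, γ i t * x t) = 0 := by
      intro x hx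
      set b : Fin m → ℝ := fun i => ∑ t, w i t * x t with hbdef
      have hb : ∀ i, b i ≠ 0 := fun i => hx (Sum.inl i)
      have habs : ∀ i j, i ≠ j → |b i| ≠ |b j| := by
        intro i j hij hcon
        rcases abs_eq_abs.1 hcon with hc | hc
        · have h := hx (Sum.inr (Sum.inl (i, j)))
          rw [hvdef] at h
          simp only [Sum.elim_inr, Sum.elim_inl, if_neg hij, Pi.sub_apply] at h
          rw [sum_sub_dot] at h
          exact h (by
            rw [show (∑ t, w i t * x t) = b i from rfl, show (∑ t, w j t * x t) = b j from rfl]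
            linarith [hc])
        · have h := hx (Sum.inr (Sum.inr (i, j)))
          rw [hvdef] at h
          simp only [Sum.elim_inr, if_neg hij, Pi.add_apply] at h
          rw [sum_add_dot] at h
          exact h (by
            rw [show (∑ t, w i t * x t) = b i from rfl, show (∑ t, w j t * x t) = b j from rfl]
            linarith [hc])
      have h1d : ∀ s : ℝ, ∑ i, (c i * Real.tanh (b i * s)
          + (∑ t, γ i t * x t) * (s / Real.cosh (b i * s)^2)) = 0 := by
        intro s
        have hk := key (fun t => s * x t)
        have hsum1 : ∀ i, ∑ t, w i t * (s * x t) = b i * s := by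
          intro i
          rw [hbdef, Finset.sum_mul]
          exact Finset.sum_congr rfl fun t _ => by ring
        have hsum2 : ∀ i, ∑ t, γ i t * (s * x t) = (∑ t, γ i t * x t) * s := by
          intro i
          rw [Finset.sum_mul]
          exact Finset.sum_congr rfl fun t _ => by ring
        rw [← hk]
        apply Finset.sum_congr rfl
        intro i _
        rw [hsum1 i, hsum2 i]
        ring
      exact fun i => oneD b c (fun i => ∑ t, γ i t * x t) hb habs h1d i
    -- conclude coefficients vanish
    have hc0 : ∀ i, c i = 0 := by
      obtain ⟨y, hy⟩ := exists_common_nonvanishing v hv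
      exact fun i => (main y hy i).1
    have hγ0 : ∀ i, γ i = 0 :=
      fun i => functional_zero v hv (γ i) (fun x hx => (main x hx i).2)
    rintro (i | ⟨i, t⟩)
    · exact hc0 i
    · have := congrFun (hγ0 i) t
      simp only [hγdef, Pi.zero_apply] at this
      exact (mul_eq_zero.1 this).resolve_left (ha i)
  rw [finrank_span_eq_card hli]
  simp only [Fintype.card_sum, Fintype.card_prod, Fintype.card_fin]
  ring
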